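/- Lemma (degenerate 2×2 case): If a 2×2 bimatrix game Γ is degenerate for the leader (player I), i.e. Γ is not non-degenerate for player I, then X^L ⊆ NE(X): every commitment optimal strategy of player I is a Nash equilibrium strategy of the simultaneous move game. -/

import Mathlib

/-!
Degeneracy of a 2×2 game for the leader means that some row of `B` gives the follower the same
payoff in both columns. Then either the two columns of `B` coincide, or one column `j` weakly
dominates the other and strictly beats it at every fully mixed strategy.

In the first case the follower is indifferent, `α^L` is the maximin value of the zero-sum game
`A`, and a maximin strategy `x` of player I is a best reply to a suitable mixed strategy `y` of
player II (a one-dimensional minimax argument on the two affine functions `α(·, e_0)`,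
`α(·, e_1)`), so `(x, y)` is an equilibrium. In the second case `D = E(j) = {j}`, so commitment
optimal strategies maximise `α(·, e_j)` and form an equilibrium with `e_j`.
-/

open Matrix

noncomputable section

/-- The set of mixed strategies: the standard simplex in `ℝ^m`. -/
def Simp (m : ℕ) : Set (Fin m → ℝ) := stdSimplex ℝ (Fin m)

/-- Bilinear payoff `xᵀ A y`. -/
def pay {m n : ℕ} (A : Matrix (Fin m) (Fin n) ℝ) (x : Fin m → ℝ) (y : Fin n → ℝ) : ℝ :=
  x ⬝ᵥ A.mulVec y

/-- Payoff of a mixed strategy `x` against the pure strategy `j`: `α(x, e_j) = (xᵀA)_j`. -/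
def purePay {m n : ℕ} (A : Matrix (Fin m) (Fin n) ℝ) (x : Fin m → ℝ) (j : Fin n) : ℝ :=
  Matrix.vecMul x A j

/-- Pure best replies of player II against `x`. -/
def BRII {m n : ℕ} (B : Matrix (Fin m) (Fin n) ℝ) (x : Fin m → ℝ) : Set (Fin n) :=
  {j | ∀ k, purePay B x k ≤ purePay B x j}

/-- Best-reply region `X(j)` of column `j`. -/
def XReg {m n : ℕ} (B : Matrix (Fin m) (Fin n) ℝ) (j : Fin n) : Set (Fin m → ℝ) :=
  {x ∈ Simp m | j ∈ BRII B x}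

/-- `D`: columns whose best-reply region has a fully mixed point. -/
def Dset {m n : ℕ} (B : Matrix (Fin m) (Fin n) ℝ) : Set (Fin n) :=
  {j | ∃ x ∈ XReg B j, ∀ i, 0 < x i}

/-- `E(j)`: columns of `B` payoff-equivalent to column `j`. -/
def Ecols {m n : ℕ} (B : Matrix (Fin m) (Fin n) ℝ) (j : Fin n) : Set (Fin n) :=
  {k | ∀ i, B i k = B i j}

/-- `min_j α(x, e_j)`. -/
def minPure {m n : ℕ} (A : Matrix (Fin m) (Fin n) ℝ) (x : Fin m → ℝ) : ℝ :=
  sInf {w | ∃ j, w = purePay A x j}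

/-- `max_j α(x, e_j)`. -/
def maxPure {m n : ℕ} (A : Matrix (Fin m) (Fin n) ℝ) (x : Fin m → ℝ) : ℝ :=
  sSup {w | ∃ j, w = purePay A x j}

/-- `max_{j ∈ BR_II(x)} α(x, e_j)`. -/
def maxBR {m n : ℕ} (A B : Matrix (Fin m) (Fin n) ℝ) (x : Fin m → ℝ) : ℝ :=
  sSup {w | ∃ j ∈ BRII B x, w = purePay A x j}

/-- Matrix game value `v_A = max_{x ∈ X} min_j α(x, e_j)`. -/
def matVal {m n : ℕ} (A : Matrix (Fin m) (Fin n) ℝ) : ℝ :=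
  sSup {v | ∃ x ∈ Simp m, v = minPure A x}

/-- `min_{k ∈ E(j)} α(x, e_k)`. -/
def minE {m n : ℕ} (A B : Matrix (Fin m) (Fin n) ℝ) (j : Fin n) (x : Fin m → ℝ) : ℝ :=
  sInf {w | ∃ k ∈ Ecols B j, w = purePay A x k}

/-- Commitment value `α^L = max_{j∈D} max_{x∈X(j)} min_{k∈E(j)} α(x,e_k)`. -/
def alphaL {m n : ℕ} (A B : Matrix (Fin m) (Fin n) ℝ) : ℝ :=
  sSup {v | ∃ j ∈ Dset B, ∃ x ∈ XReg B j, v = minE A B j x}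

/-- Highest leader payoff `α^H = max_{j : X(j)≠∅} max_{x∈X(j)} α(x,e_j)`. -/
def alphaH {m n : ℕ} (A B : Matrix (Fin m) (Fin n) ℝ) : ℝ :=
  sSup {v | ∃ j, ∃ x ∈ XReg B j, v = purePay A x j}

/-- Commitment optimal strategies of the leader (player I). -/
def XLset {m n : ℕ} (A B : Matrix (Fin m) (Fin n) ℝ) : Set (Fin m → ℝ) :=
  {x | ∃ j ∈ Dset B, x ∈ XReg B j ∧ minE A B j x = alphaL A B}

/-- Non-degeneracy for player I: no mixed strategy of player I has more pure best
replies (among player II's pure strategies) than the size of its support. -/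
def NondegFor {m n : ℕ} (B : Matrix (Fin m) (Fin n) ℝ) : Prop :=
  ∀ x ∈ Simp m, (BRII B x).ncard ≤ {i | x i ≠ 0}.ncard

/-- Nash equilibrium of the bimatrix game `(A,B)`. -/
def isNE {m n : ℕ} (A B : Matrix (Fin m) (Fin n) ℝ) (x : Fin m → ℝ) (y : Fin n → ℝ) : Prop :=
  x ∈ Simp m ∧ y ∈ Simp n ∧
  (∀ x' ∈ Simp m, pay A x' y ≤ pay A x y) ∧
  (∀ y' ∈ Simp n, pay B x y' ≤ pay B x y)

/-- Strategies of player I appearing in some Nash equilibrium. -/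
def NEX {m n : ℕ} (A B : Matrix (Fin m) (Fin n) ℝ) : Set (Fin m → ℝ) :=
  {x | ∃ y, isNE A B x y}

/-- Strategies of player II appearing in some Nash equilibrium. -/
def NEY {m n : ℕ} (A B : Matrix (Fin m) (Fin n) ℝ) : Set (Fin n → ℝ) :=
  {y | ∃ x, isNE A B x y}

/-- Weakly unilaterally competitive bimatrix game. -/
def WUC {m n : ℕ} (A B : Matrix (Fin m) (Fin n) ℝ) : Prop :=
  (∀ x₁ ∈ Simp m, ∀ x₂ ∈ Simp m, ∀ y ∈ Simp n,
    (pay A x₁ y > pay A x₂ y → pay B x₁ y ≤ pay B x₂ y) ∧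
    (pay A x₁ y = pay A x₂ y → pay B x₁ y = pay B x₂ y)) ∧
  (∀ y₁ ∈ Simp n, ∀ y₂ ∈ Simp n, ∀ x ∈ Simp m,
    (pay B x y₁ > pay B x y₂ → pay A x y₁ ≤ pay A x y₂) ∧
    (pay B x y₁ = pay B x y₂ → pay A x y₁ = pay A x y₂))


open Set

section

variable {m n : ℕ}

lemma purePay_eq_sum (A : Matrix (Fin m) (Fin n) ℝ) (x : Fin m → ℝ) (j : Fin n) :
    purePay A x j = ∑ i, x i * A i j := rfl

lemma pay_eq_sum_purePay (A : Matrix (Fin m) (Fin n) ℝ) (x : Fin m → ℝ) (y : Fin n → ℝ) :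
    pay A x y = ∑ k, y k * purePay A x k := by
  rw [pay, Matrix.dotProduct_mulVec, dotProduct]
  exact Finset.sum_congr rfl fun k _ => mul_comm _ _

lemma pay_single (A : Matrix (Fin m) (Fin n) ℝ) (x : Fin m → ℝ) (j : Fin n) :
    pay A x (Pi.single j 1) = purePay A x j := by
  simp [pay_eq_sum_purePay, Pi.single_apply]

lemma purePay_le_purePay_of_forall_le (A : Matrix (Fin m) (Fin n) ℝ) {x : Fin m → ℝ}
    (hx : x ∈ Simp m) {j k : Fin n} (h : ∀ i, A i k ≤ A i j) : purePay A x k ≤ purePay A x j := by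
  simp only [purePay_eq_sum]
  exact Finset.sum_le_sum fun i _ => mul_le_mul_of_nonneg_left (h i) (hx.1 i)

lemma purePay_lt_purePay_of_pos (A : Matrix (Fin m) (Fin n) ℝ) {x : Fin m → ℝ}
    (hx : ∀ i, 0 < x i) {j k : Fin n} (hle : ∀ i, A i k ≤ A i j) (hlt : ∃ i, A i k < A i j) :
    purePay A x k < purePay A x j := by
  obtain ⟨i, hi⟩ := hlt
  simp only [purePay_eq_sum]
  exact Finset.sum_lt_sum (fun i _ => mul_le_mul_of_nonneg_left (hle i) (hx i).le)
    ⟨i, Finset.mem_univ i, mul_lt_mul_of_pos_left hi (hx i)⟩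

lemma pay_le_purePay_of_mem_BRII (B : Matrix (Fin m) (Fin n) ℝ) {x : Fin m → ℝ}
    {y : Fin n → ℝ} (hy : y ∈ Simp n) {j : Fin n} (hj : j ∈ BRII B x) :
    pay B x y ≤ purePay B x j := by
  calc pay B x y ≤ ∑ k, y k * purePay B x j := by
        rw [pay_eq_sum_purePay]
        exact Finset.sum_le_sum fun k _ => mul_le_mul_of_nonneg_left (hj k) (hy.1 k)
    _ = purePay B x j := by rw [← Finset.sum_mul, hy.2, one_mul]

lemma pay_eq_purePay_of_support_subset_BRII (B : Matrix (Fin m) (Fin n) ℝ) {x : Fin m → ℝ}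
    {y : Fin n → ℝ} (hy : y ∈ Simp n) (hsupp : ∀ k, y k ≠ 0 → k ∈ BRII B x) {j : Fin n}
    (hj : j ∈ BRII B x) : pay B x y = purePay B x j := by
  calc pay B x y = ∑ k, y k * purePay B x j := by
        rw [pay_eq_sum_purePay]
        refine Finset.sum_congr rfl fun k _ => ?_
        by_cases hk : y k = 0
        · simp [hk]
        · rw [le_antisymm (hj k) (hsupp k hk j)]
    _ = purePay B x j := by rw [← Finset.sum_mul, hy.2, one_mul]

lemma isNE_of_isMaxOn_of_support_subset_BRII {A B : Matrix (Fin m) (Fin n) ℝ}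
    {x : Fin m → ℝ} {y : Fin n → ℝ} (hx : x ∈ Simp m) (hy : y ∈ Simp n)
    (hA : IsMaxOn (pay A · y) (Simp m) x) (hsupp : ∀ k, y k ≠ 0 → k ∈ BRII B x) :
    isNE A B x y := by
  obtain ⟨j, hj⟩ : ∃ j, y j ≠ 0 := by
    by_contra! h
    simpa [h] using hy.2
  refine ⟨hx, hy, fun x' hx' => hA hx', fun y' hy' => ?_⟩
  rw [pay_eq_purePay_of_support_subset_BRII B hy hsupp (hsupp j hj)]
  exact pay_le_purePay_of_mem_BRII B hy' (hsupp j hj)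

lemma exists_purePay_le (A : Matrix (Fin m) (Fin n) ℝ) :
    ∃ C, ∀ x ∈ Simp m, ∀ j, purePay A x j ≤ C := by
  refine ⟨∑ i, ∑ k, |A i k|, fun x hx j => ?_⟩
  calc purePay A x j ≤ ∑ i, x i * ∑ i, ∑ k, |A i k| := by
        rw [purePay_eq_sum]
        refine Finset.sum_le_sum fun i _ => mul_le_mul_of_nonneg_left ?_ (hx.1 i)
        exact (le_abs_self _).trans <| (Finset.single_le_sum (fun k _ => abs_nonneg (A i k))
          (Finset.mem_univ j)).trans <| Finset.single_le_sum (f := fun i => ∑ k, |A i k|)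
          (fun i _ => Finset.sum_nonneg fun k _ => abs_nonneg _) (Finset.mem_univ i)
    _ = ∑ i, ∑ k, |A i k| := by rw [← Finset.sum_mul, hx.2, one_mul]

variable {A B : Matrix (Fin m) (Fin n) ℝ}

lemma minE_le_purePay (j : Fin n) (x : Fin m → ℝ) : minE A B j x ≤ purePay A x j :=
  csInf_le ((Set.finite_range (purePay A x)).subset
    (by rintro _ ⟨k, -, rfl⟩; exact ⟨k, rfl⟩)).bddBelow ⟨j, fun _ => rfl, rfl⟩

lemma le_alphaL {j : Fin n} (hj : j ∈ Dset B) {x : Fin m → ℝ} (hx : x ∈ XReg B j) :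
    minE A B j x ≤ alphaL A B := by
  refine le_csSup ?_ ⟨j, hj, x, hx, rfl⟩
  obtain ⟨C, hC⟩ := exists_purePay_le A
  exact ⟨C, by rintro _ ⟨k, -, z, hz, rfl⟩; exact (minE_le_purePay k z).trans (hC z hz.1 k)⟩

theorem XLset_subset_NEX_of_weaklyDominant {j : Fin n} (hle : ∀ k i, B i k ≤ B i j)
    (hlt : ∀ k ≠ j, ∃ i, B i k < B i j) : XLset A B ⊆ NEX A B := by
  rintro x ⟨j₀, hD, hx, hxL⟩
  have hXReg : ∀ z ∈ Simp m, z ∈ XReg B j :=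
    fun z hz => ⟨hz, fun k => purePay_le_purePay_of_forall_le B hz (hle k)⟩
  obtain rfl : j₀ = j := by
    by_contra hne
    obtain ⟨z, hz, hzpos⟩ := hD
    exact (purePay_lt_purePay_of_pos B hzpos (hle j₀) (hlt j₀ hne)).not_ge (hz.2 j)
  have hEcols : Ecols B j₀ = {j₀} := by
    refine Set.eq_singleton_iff_unique_mem.2 ⟨fun _ => rfl, fun k hk => ?_⟩
    by_contra hne
    obtain ⟨i, hi⟩ := hlt k hne
    exact hi.ne (hk i)
  have hminE : ∀ z, minE A B j₀ z = purePay A z j₀ := fun z => by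
    simp [minE, hEcols]
  have hmax : IsMaxOn (purePay A · j₀) (Simp m) x := isMaxOn_iff.2 fun z hz => by
    simpa only [← hminE, hxL] using le_alphaL hD (hXReg z hz)
  refine ⟨Pi.single j₀ 1, isNE_of_isMaxOn_of_support_subset_BRII hx.1
    (single_mem_stdSimplex ℝ j₀) ?_ fun k hk => ?_⟩
  · simpa only [pay_single] using hmax
  · obtain rfl : k = j₀ := by simpa [Pi.single_apply] using hk
    exact hx.2

lemma isMaxOn_minPure_of_mem_XLset (hB : ∀ i k l, B i k = B i l) {x : Fin m → ℝ}
    (hx : x ∈ XLset A B) :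
    IsMaxOn (minPure A) (Simp m) x := by
  obtain ⟨j, hD, -, hxL⟩ := hx
  have hEcols : Ecols B j = univ := eq_univ_of_forall fun k i => hB i k j
  have hminE : ∀ z, minE A B j z = minPure A z := fun z => by
    simp [minE, minPure, hEcols]
  refine isMaxOn_iff.2 fun z hz => ?_
  simpa only [← hminE, hxL] using
    le_alphaL hD ⟨hz, fun k => purePay_le_purePay_of_forall_le B hz fun i => (hB i k j).le⟩

end

lemma exists_isMaxOn_convexComb_of_isMaxOn_min {a b s t p₀ : ℝ} (hp₀ : p₀ ∈ Icc (0 : ℝ) 1)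
    (hmax : IsMaxOn (fun p => min (a + s * p) (b + t * p)) (Icc 0 1) p₀) :
    ∃ l ∈ Icc (0 : ℝ) 1,
      IsMaxOn (fun p => l * (a + s * p) + (1 - l) * (b + t * p)) (Icc 0 1) p₀ := by
  wlog hst : s ≤ t generalizing a b s t
  · obtain ⟨l, hl, hlmax⟩ := this (a := b) (b := a) (s := t) (t := s)
      (by simpa only [min_comm] using hmax) (le_of_not_ge hst)
    refine ⟨1 - l, ⟨by linarith [hl.2], by linarith [hl.1]⟩, isMaxOn_iff.2 fun p hp => ?_⟩
    have := isMaxOn_iff.1 hlmax p hp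
    linarith
  rcases lt_or_ge 0 s with hs | hs
  · have hp₀1 : p₀ = 1 := by
      by_contra hne
      have hlt : p₀ < 1 := lt_of_le_of_ne hp₀.2 hne
      refine (isMaxOn_iff.1 hmax 1 (right_mem_Icc.2 zero_le_one)).not_gt ?_
      exact lt_min (min_lt_of_left_lt (by nlinarith)) (min_lt_of_right_lt (by nlinarith))
    refine ⟨1, right_mem_Icc.2 zero_le_one, isMaxOn_iff.2 fun p hp => ?_⟩
    simp only [hp₀1]
    nlinarith [hp.2]
  rcases lt_or_ge t 0 with ht | ht
  · have hp₀0 : p₀ = 0 := by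
      by_contra hne
      have hlt : 0 < p₀ := lt_of_le_of_ne hp₀.1 (Ne.symm hne)
      refine (isMaxOn_iff.1 hmax 0 (left_mem_Icc.2 zero_le_one)).not_gt ?_
      exact lt_min (min_lt_of_left_lt (by nlinarith)) (min_lt_of_right_lt (by nlinarith))
    refine ⟨1, right_mem_Icc.2 zero_le_one, isMaxOn_iff.2 fun p hp => ?_⟩
    simp only [hp₀0]
    nlinarith [hp.1]
  -- Slopes of opposite signs: weight them so that the combination is constant.
  · set l := t / (t - s)
    have hslope : l * s + (1 - l) * t = 0 := by
      rcases (sub_nonneg.2 hst).eq_or_lt with h | h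
      · obtain rfl : t = 0 := by linarith
        obtain rfl : s = 0 := by linarith
        ring
      · linear_combination -(div_mul_cancel₀ t h.ne')
    refine ⟨l, ⟨div_nonneg ht (by linarith), div_le_one_of_le₀ (by linarith) (by linarith)⟩,
      isMaxOn_iff.2 fun p _ => le_of_eq ?_⟩
    linear_combination (p - p₀) * hslope

lemma mem_simp_two_iff {x : Fin 2 → ℝ} : x ∈ Simp 2 ↔ x 0 ∈ Icc 0 1 ∧ x 1 = 1 - x 0 := by
  simp only [Simp, stdSimplex, Set.mem_ofPred_eq, Fin.forall_fin_two, Fin.sum_univ_two, mem_Icc]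
  constructor
  · rintro ⟨⟨h0, h1⟩, hsum⟩
    exact ⟨⟨h0, by linarith⟩, by linarith⟩
  · rintro ⟨⟨h0, h1⟩, hx1⟩
    exact ⟨⟨h0, by linarith⟩, by linarith⟩

lemma purePay_fin_two {n : ℕ} (A : Matrix (Fin 2) (Fin n) ℝ) {x : Fin 2 → ℝ}
    (hx : x 1 = 1 - x 0) (j : Fin n) : purePay A x j = A 1 j + (A 0 j - A 1 j) * x 0 := by
  rw [purePay_eq_sum, Fin.sum_univ_two, hx]
  ring

lemma minPure_fin_two {m : ℕ} (A : Matrix (Fin m) (Fin 2) ℝ) (x : Fin m → ℝ) :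
    minPure A x = min (purePay A x 0) (purePay A x 1) := by
  have : {w | ∃ j, w = purePay A x j} = {purePay A x 0, purePay A x 1} := by
    ext w; simp [Fin.exists_fin_two]
  rw [minPure, this, csInf_pair]

lemma exists_isMaxOn_pay_of_isMaxOn_minPure (A : Matrix (Fin 2) (Fin 2) ℝ) {x : Fin 2 → ℝ}
    (hx : x ∈ Simp 2) (hmax : IsMaxOn (minPure A) (Simp 2) x) :
    ∃ y ∈ Simp 2, IsMaxOn (pay A · y) (Simp 2) x := by
  obtain ⟨hx0, hx1⟩ := mem_simp_two_iff.1 hx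
  have hmax' : IsMaxOn
      (fun p => min (A 1 0 + (A 0 0 - A 1 0) * p) (A 1 1 + (A 0 1 - A 1 1) * p))
      (Icc 0 1) (x 0) := isMaxOn_iff.2 fun p hp => by
    have hp1 : (![p, 1 - p] : Fin 2 → ℝ) 1 = 1 - ![p, 1 - p] 0 := rfl
    simpa [minPure_fin_two, purePay_fin_two A hp1, purePay_fin_two A hx1] using
      isMaxOn_iff.1 hmax ![p, 1 - p] (mem_simp_two_iff.2 ⟨hp, hp1⟩)
  obtain ⟨l, hl, hlmax⟩ := exists_isMaxOn_convexComb_of_isMaxOn_min hx0 hmax'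
  refine ⟨![l, 1 - l], mem_simp_two_iff.2 ⟨hl, rfl⟩, isMaxOn_iff.2 fun z hz => ?_⟩
  obtain ⟨hz0, hz1⟩ := mem_simp_two_iff.1 hz
  simpa [pay_eq_sum_purePay, Fin.sum_univ_two, purePay_fin_two A hz1, purePay_fin_two A hx1]
    using isMaxOn_iff.1 hlmax (z 0) hz0

theorem XLset_subset_NEX_of_columns_eq {A B : Matrix (Fin 2) (Fin 2) ℝ}
    (hB : ∀ i k l, B i k = B i l) : XLset A B ⊆ NEX A B := by
  intro x hx
  have hxS : x ∈ Simp 2 := by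
    obtain ⟨j, -, hxX, -⟩ := hx
    exact hxX.1
  obtain ⟨y, hy, hA⟩ := exists_isMaxOn_pay_of_isMaxOn_minPure A hxS
    (isMaxOn_minPure_of_mem_XLset hB hx)
  exact ⟨y, isNE_of_isMaxOn_of_support_subset_BRII hxS hy hA fun k _ l =>
    purePay_le_purePay_of_forall_le B hxS fun i => (hB i l k).le⟩

lemma exists_row_eq_of_not_nondegFor {B : Matrix (Fin 2) (Fin 2) ℝ} (hdeg : ¬ NondegFor B) :
    ∃ i, B i 0 = B i 1 := by
  simp only [NondegFor, not_forall, not_le] at hdeg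
  obtain ⟨x, hx, hlt⟩ := hdeg
  obtain ⟨⟨h0, -⟩, h1⟩ := mem_simp_two_iff.1 hx
  have hBR : BRII B x = univ := by
    by_contra hne
    have hBR1 : (BRII B x).ncard ≤ 1 := by simpa using Set.ncard_lt_card hne
    have hsupp : {i | x i ≠ 0} = ∅ := (Set.ncard_eq_zero (Set.toFinite _)).1 (by omega)
    have hx0 : x 0 = 0 := by by_contra h; exact hsupp.subset h
    have hx1 : x 1 = 0 := by by_contra h; exact hsupp.subset h
    linarith
  obtain ⟨i, hi⟩ : ∃ i, x i = 0 := by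
    by_contra! h
    have := Set.ncard_le_card (BRII B x)
    have hsupp : {i | x i ≠ 0} = univ := eq_univ_of_forall h
    rw [hsupp, Set.ncard_univ] at hlt
    omega
  have h01 : purePay B x 0 = purePay B x 1 :=
    le_antisymm ((hBR ▸ mem_univ 1 : (1 : Fin 2) ∈ BRII B x) 0)
      ((hBR ▸ mem_univ 0 : (0 : Fin 2) ∈ BRII B x) 1)
  rw [purePay_fin_two B h1, purePay_fin_two B h1] at h01
  fin_cases i
  · exact ⟨1, by simpa [show x 0 = 0 from hi] using h01⟩
  · exact ⟨0, by simpa [show x 0 = 1 by simp at hi; linarith] using h01⟩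

lemma columns_eq_or_weaklyDominant {B : Matrix (Fin 2) (Fin 2) ℝ} (h : ∃ i, B i 0 = B i 1) :
    (∀ i k l, B i k = B i l) ∨ ∃ j, (∀ k i, B i k ≤ B i j) ∧ ∀ k ≠ j, ∃ i, B i k < B i j := by
  obtain ⟨i, hi⟩ := h
  simp only [Fin.forall_fin_two, Fin.exists_fin_two]
  fin_cases i <;> grind

/-- if a 2×2 bimatrix game is degenerate for the leader (player I),
then every commitment optimal strategy of player I is a Nash equilibrium strategy:
`X^L ⊆ NE(X)`. -/
theorem stmt12 (A B : Matrix (Fin 2) (Fin 2) ℝ) (hdeg : ¬ NondegFor B) :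
    XLset A B ⊆ NEX A B := by
  rcases columns_eq_or_weaklyDominant (exists_row_eq_of_not_nondegFor hdeg) with
    hB | ⟨j, hle, hlt⟩
  · exact XLset_subset_NEX_of_columns_eq hB
  · exact XLset_subset_NEX_of_weaklyDominant hle hlt
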